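/- arXiv:1610.03474 — 5 statements merged into one kernel-verified Lean document; each statement's English description precedes it below -/
import Mathlib

section
/- Suppose each agent i has linear utility U_i(x) = ∑_j u_{ij} x_j with u_i ∈ ℝ^k_{≥0}, u_i ≠ 0, and x* ∈ ℝ^k_{≥0} with ∑_j x*_j ≤ B maximizes ∑_i log U_i(x) over the simplex {x ≥ 0, ∑_j x_j ≤ B}. If x* satisfies the first-order conditions ∑_i u_{ij}/U_i(x*) ≤ n/B for all j with equality when x*_j > 0, then x* lies in the core: there is no subset S of agents and allocation y ≥ 0 with ∑_j y_j ≤ (|S|/n)·B such that U_i(y) > U_i(x*) for every i ∈ S. -/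
/-!
The first-order conditions say that `p j = ∑ i, u i j / U i x` is at most `n / B` for every item.
Weighting each agent's utility by `1 / U i x`, a coalition `S` in which everyone strictly gains
has `∑ i ∈ S, U i y / U i x > |S|`, while the same quantity equals `∑ j, y j * p j`, which is at
most `(n / B) * ∑ j, y j ≤ |S|` when `y` respects the coalition's share of the budget.
-/

open Finset

theorem sum_div_eq_sum_mul_sum_div {ι κ : Type*} [Fintype κ] (S : Finset ι)
    (u : ι → κ → ℝ) (y : κ → ℝ) (p : ι → ℝ) :
    ∑ i ∈ S, (∑ j, u i j * y j) / p i = ∑ j, y j * ∑ i ∈ S, u i j / p i := by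
  simp_rw [sum_div, mul_sum]
  rw [sum_comm]
  refine sum_congr rfl fun j _ => sum_congr rfl fun i _ => ?_
  ring

theorem card_lt_sum_div_of_lt {ι : Type*} {S : Finset ι} (hS : S.Nonempty) {a b : ι → ℝ}
    (ha : ∀ i ∈ S, 0 < a i) (hab : ∀ i ∈ S, a i < b i) :
    (#S : ℝ) < ∑ i ∈ S, b i / a i := by
  calc (#S : ℝ) = ∑ _i ∈ S, (1 : ℝ) := by simp
    _ < ∑ i ∈ S, b i / a i :=
      sum_lt_sum_of_nonempty hS fun i hi => (one_lt_div (ha i hi)).2 (hab i hi)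

theorem card_lt_mul_sum_of_forall_lt {ι κ : Type*} [Fintype κ] {S : Finset ι} (hS : S.Nonempty)
    (u : ι → κ → ℝ) {x y : κ → ℝ} (hy : ∀ j, 0 ≤ y j) {c : ℝ}
    (hpos : ∀ i ∈ S, 0 < ∑ j, u i j * x j)
    (hprice : ∀ j, ∑ i ∈ S, u i j / (∑ m, u i m * x m) ≤ c)
    (hblock : ∀ i ∈ S, ∑ j, u i j * x j < ∑ j, u i j * y j) :
    (#S : ℝ) < c * ∑ j, y j := by
  calc (#S : ℝ) < ∑ i ∈ S, (∑ j, u i j * y j) / (∑ j, u i j * x j) :=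
        card_lt_sum_div_of_lt hS hpos hblock
    _ = ∑ j, y j * ∑ i ∈ S, u i j / (∑ m, u i m * x m) := sum_div_eq_sum_mul_sum_div S u y _
    _ ≤ ∑ j, y j * c := sum_le_sum fun j _ => mul_le_mul_of_nonneg_left (hprice j) (hy j)
    _ = c * ∑ j, y j := by rw [← sum_mul, mul_comm]

theorem stmt3_general (n k : ℕ) (B : ℝ) (hB : 0 < B)
    (u : Fin n → Fin k → ℝ) (hu : ∀ i j, 0 ≤ u i j)
    (x : Fin k → ℝ)
    (hpos : ∀ i, 0 < ∑ j, u i j * x j)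
    (hfoc : ∀ j, ∑ i, u i j / (∑ m, u i m * x m) ≤ (n : ℝ) / B) :
    ¬ ∃ S : Finset (Fin n), S.Nonempty ∧ ∃ y : Fin k → ℝ,
      (∀ j, 0 ≤ y j) ∧ ∑ j, y j ≤ ((S.card : ℝ) / n) * B ∧
      ∀ i ∈ S, (∑ j, u i j * x j) < ∑ j, u i j * y j := by
  rintro ⟨S, hS, y, hy, hyB, hblock⟩
  have hprice : ∀ j, ∑ i ∈ S, u i j / (∑ m, u i m * x m) ≤ (n : ℝ) / B := fun j =>
    (sum_le_sum_of_subset_of_nonneg (subset_univ S) fun i _ _ =>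
      div_nonneg (hu i j) (hpos i).le).trans (hfoc j)
  have hn : (0 : ℝ) < n := by
    exact_mod_cast hS.card_pos.trans_le ((card_le_univ S).trans_eq (Fintype.card_fin n))
  have hcost : (n : ℝ) / B * ∑ j, y j ≤ #S := by
    calc (n : ℝ) / B * ∑ j, y j ≤ (n : ℝ) / B * ((#S : ℝ) / n * B) := by gcongr
      _ = #S := by field_simp
  linarith [card_lt_mul_sum_of_forall_lt hS u hy (fun i _ => hpos i) hprice hblock]

/-- For linear utilities, a maximizer of `∑_i log U_i` over the budget simplex
satisfying the first-order conditions lies in the core. -/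
theorem stmt3 (n k : ℕ) (B : ℝ) (hB : 0 < B) (hn : 0 < n)
    (u : Fin n → Fin k → ℝ) (hu : ∀ i j, 0 ≤ u i j) (hu0 : ∀ i, u i ≠ 0)
    (x : Fin k → ℝ) (hx : ∀ j, 0 ≤ x j) (hxB : ∑ j, x j ≤ B)
    (hpos : ∀ i, 0 < ∑ j, u i j * x j)
    (hmax : ∀ y : Fin k → ℝ, (∀ j, 0 ≤ y j) → ∑ j, y j ≤ B →
      ∑ i, Real.log (∑ j, u i j * y j) ≤ ∑ i, Real.log (∑ j, u i j * x j))
    (hfoc : ∀ j, ∑ i, u i j / (∑ m, u i m * x m) ≤ (n : ℝ) / B)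
    (hfoc' : ∀ j, 0 < x j → ∑ i, u i j / (∑ m, u i m * x m) = (n : ℝ) / B) :
    ¬ ∃ S : Finset (Fin n), S.Nonempty ∧ ∃ y : Fin k → ℝ,
      (∀ j, 0 ≤ y j) ∧ ∑ j, y j ≤ ((S.card : ℝ) / n) * B ∧
      ∀ i ∈ S, (∑ j, u i j * x j) < ∑ j, u i j * y j :=
  stmt3_general n k B hB u hu x hpos hfoc
end

section
/- Let U_i be differentiable concave utilities and x ≥ 0 an allocation with ∑_j x_j ≤ B. Suppose there are prices p_i ∈ ℝ^k_{≥0} and dual variables λ_i > 0 satisfying: (i) ∂U_i/∂x_j (x) ≤ λ_i p_{ij} for all i, j, with equality when x_j > 0; (ii) ∑_j p_{ij} x_j = B/n for all i; (iii) ∑_i p_{ij} ≤ 1 for all j, with equality when x_j > 0. Then for every item j, ∑_i [∂U_i/∂x_j(x) / ∑_m x_m ∂U_i/∂x_m(x)] ≤ n/B, with equality when x_j > 0. -/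
/-!
Complementary slackness turns `∑_m x_m ∂_m U_i(x)` into `λ_i ∑_m p_im x_m = λ_i B/n`. Dividing
`∂_j U_i(x) ≤ λ_i p_ij` by it bounds agent `i`'s normalized marginal utility for item `j` by
`p_ij / (B/n)`, with equality when `x_j > 0`; summing over the agents and using `∑_i p_ij ≤ 1`
(with equality when `x_j > 0`) gives `n/B`.
-/

open Finset

theorem sum_mul_eq_mul_sum_of_eq_on_pos {κ : Type*} [Fintype κ] {x d q : κ → ℝ} {l : ℝ}
    (hx : ∀ j, 0 ≤ x j) (h : ∀ j, 0 < x j → d j = l * q j) :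
    ∑ j, x j * d j = l * ∑ j, q j * x j := by
  rw [mul_sum]
  refine sum_congr rfl fun j _ => ?_
  rcases (hx j).eq_or_lt with hj | hj
  · simp [← hj]
  · rw [h j hj]
    ring

theorem div_mul_le_div_of_le_mul {d l q c : ℝ} (hlc : 0 < l * c) (h : d ≤ l * q) :
    d / (l * c) ≤ q / c :=
  (div_le_div_of_nonneg_right h hlc.le).trans_eq
    (mul_div_mul_left q c (left_ne_zero_of_mul hlc.ne'))

theorem div_mul_eq_div_of_eq_mul {d l q c : ℝ} (hlc : 0 < l * c) (h : d = l * q) :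
    d / (l * c) = q / c := by
  rw [h, mul_div_mul_left q c (left_ne_zero_of_mul hlc.ne')]

/-- `dU i j` stands for `∂U_i/∂x_j (x)` and `lam i` for the dual variable `λ_i`. -/
theorem stmt4_general (n k : ℕ) (B : ℝ) (hB : 0 < B)
    (x : Fin k → ℝ) (hx : ∀ j, 0 ≤ x j)
    (dU : Fin n → Fin k → ℝ) (p : Fin n → Fin k → ℝ) (lam : Fin n → ℝ)
    (hpos : ∀ i, 0 < ∑ m, x m * dU i m)
    (h1 : ∀ i j, dU i j ≤ lam i * p i j)
    (h1' : ∀ i j, 0 < x j → dU i j = lam i * p i j)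
    (h2 : ∀ i, ∑ j, p i j * x j = B / n)
    (h3 : ∀ j, ∑ i, p i j ≤ 1)
    (h3' : ∀ j, 0 < x j → ∑ i, p i j = 1) :
    ∀ j, ∑ i, dU i j / (∑ m, x m * dU i m) ≤ (n : ℝ) / B ∧
      (0 < x j → ∑ i, dU i j / (∑ m, x m * dU i m) = (n : ℝ) / B) := by
  intro j
  have hbudget : ∀ i, ∑ m, x m * dU i m = lam i * (B / n) := fun i => by
    rw [sum_mul_eq_mul_sum_of_eq_on_pos hx (h1' i), h2]
  have hden : ∀ i, 0 < lam i * (B / n) := fun i => hbudget i ▸ hpos i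
  have hprices : ∑ i, p i j / (B / n) = (∑ i, p i j) / (B / n) := (sum_div _ _ _).symm
  simp_rw [hbudget]
  refine ⟨?_, fun hj => ?_⟩
  · calc ∑ i, dU i j / (lam i * (B / n)) ≤ ∑ i, p i j / (B / n) :=
          sum_le_sum fun i _ => div_mul_le_div_of_le_mul (hden i) (h1 i j)
      _ ≤ 1 / (B / n) := hprices ▸ div_le_div_of_nonneg_right (h3 j) (by positivity)
      _ = n / B := one_div_div B n
  · calc ∑ i, dU i j / (lam i * (B / n)) = ∑ i, p i j / (B / n) :=
          sum_congr rfl fun i _ => div_mul_eq_div_of_eq_mul (hden i) (h1' i j hj)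
      _ = n / B := by rw [hprices, h3' j hj, one_div_div]

/-- Price-free characterization of the Lindahl equilibrium: from prices and dual
variables satisfying the equilibrium conditions, derive the condition
`∑_i ∂_j U_i(x) / (∑_m x_m ∂_m U_i(x)) ≤ n/B`, with equality when `x_j > 0`.
Here `dU i j` denotes `∂U_i/∂x_j` evaluated at `x`. -/
theorem stmt4 (n k : ℕ) (B : ℝ) (hB : 0 < B) (hn : 0 < n)
    (x : Fin k → ℝ) (hx : ∀ j, 0 ≤ x j) (hxB : ∑ j, x j ≤ B)
    (dU : Fin n → Fin k → ℝ) (p : Fin n → Fin k → ℝ) (lam : Fin n → ℝ)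
    (hp : ∀ i j, 0 ≤ p i j) (hlam : ∀ i, 0 < lam i)
    (hpos : ∀ i, 0 < ∑ m, x m * dU i m)
    (h1 : ∀ i j, dU i j ≤ lam i * p i j)
    (h1' : ∀ i j, 0 < x j → dU i j = lam i * p i j)
    (h2 : ∀ i, ∑ j, p i j * x j = B / n)
    (h3 : ∀ j, ∑ i, p i j ≤ 1)
    (h3' : ∀ j, 0 < x j → ∑ i, p i j = 1) :
    ∀ j, ∑ i, dU i j / (∑ m, x m * dU i m) ≤ (n : ℝ) / B ∧
      (0 < x j → ∑ i, dU i j / (∑ m, x m * dU i m) = (n : ℝ) / B) :=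
  stmt4_general n k B hB x hx dU p lam hpos h1 h1' h2 h3 h3'
end

section
/- Let q(x) = n − n^{−γ} max_{y ∈ P} ∑_i U_i(y)/U_i(x) with linear utilities, ‖u_i‖₁ = 1 for all i, over P = {x : x_j ≥ n^{−γ}, ∑_j x_j ≤ 1}. If agent i' changes her reported utility vector from u_{i'} to another unit-ℓ₁-norm vector, then for any fixed x ∈ P the score q changes by at most 1 in absolute value (the sensitivity of q is at most 1). -/
/-- The sensitivity of the scoring function `q` to the report of a single agent is
at most `1`: if agent `i'` changes her reported (unit-ℓ₁-norm, nonnegative) utility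
vector, then for any fixed `x ∈ P` the score changes by at most `1` in absolute value. -/
theorem stmt11 (n k : ℕ) (γ : ℝ) (hγ : γ ∈ Set.Ioo (0:ℝ) 1) (hn : 0 < n)
    (u u' : Fin n → Fin k → ℝ)
    (hu : ∀ i j, 0 ≤ u i j) (hu1 : ∀ i, ∑ j, u i j = 1)
    (hu' : ∀ i j, 0 ≤ u' i j) (hu1' : ∀ i, ∑ j, u' i j = 1)
    (i' : Fin n) (hsame : ∀ i, i ≠ i' → u i = u' i)
    (hk : (k : ℝ) * (n : ℝ) ^ (-γ) < 1)
    (P : Set (Fin k → ℝ))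
    (hP : P = {x : Fin k → ℝ | (∀ j, (n:ℝ) ^ (-γ) ≤ x j) ∧ ∑ j, x j ≤ 1})
    (x : Fin k → ℝ) (hx : x ∈ P) :
    |((n : ℝ) - (n:ℝ) ^ (-γ) *
        sSup {v : ℝ | ∃ y ∈ P, v = ∑ i, (∑ j, u i j * y j) / (∑ j, u i j * x j)})
     - ((n : ℝ) - (n:ℝ) ^ (-γ) *
        sSup {v : ℝ | ∃ y ∈ P, v = ∑ i, (∑ j, u' i j * y j) / (∑ j, u' i j * x j)})|
      ≤ 1 := by
  have hnpos : (0:ℝ) < n := by exact_mod_cast hn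
  set c : ℝ := (n:ℝ) ^ (-γ) with hc
  have hcpos : 0 < c := Real.rpow_pos_of_pos hnpos _
  subst hP
  obtain ⟨hxlb, hxsum⟩ := hx
  -- denominator lower bound
  have hden : ∀ w : Fin k → ℝ, (∀ j, 0 ≤ w j) → (∑ j, w j = 1) → c ≤ ∑ j, w j * x j := by
    intro w hw hw1
    calc c = ∑ j, w j * c := by rw [← Finset.sum_mul, hw1, one_mul]
    _ ≤ ∑ j, w j * x j :=
      Finset.sum_le_sum fun j _ => mul_le_mul_of_nonneg_left (hxlb j) (hw j)
  -- term bounds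
  have hterm : ∀ (w y : Fin k → ℝ), (∀ j, 0 ≤ w j) → (∑ j, w j = 1) →
      (∀ j, c ≤ y j) → (∑ j, y j ≤ 1) →
      0 ≤ (∑ j, w j * y j) / (∑ j, w j * x j) ∧
      (∑ j, w j * y j) / (∑ j, w j * x j) ≤ c⁻¹ := by
    intro w y hw hw1 hylb hysum
    have hd := hden w hw hw1
    have hdpos : 0 < ∑ j, w j * x j := lt_of_lt_of_le hcpos hd
    have hynn : ∀ j, 0 ≤ y j := fun j => le_trans hcpos.le (hylb j)
    have hnumnn : 0 ≤ ∑ j, w j * y j :=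
      Finset.sum_nonneg fun j _ => mul_nonneg (hw j) (hynn j)
    have hyj1 : ∀ j, y j ≤ 1 := by
      intro j
      calc y j ≤ ∑ j', y j' :=
            Finset.single_le_sum (fun j' _ => hynn j') (Finset.mem_univ j)
      _ ≤ 1 := hysum
    have hnum1 : (∑ j, w j * y j) ≤ 1 := by
      calc (∑ j, w j * y j) ≤ ∑ j, w j * 1 :=
            Finset.sum_le_sum fun j _ => mul_le_mul_of_nonneg_left (hyj1 j) (hw j)
      _ = 1 := by simp [hw1]
    refine ⟨div_nonneg hnumnn hdpos.le, ?_⟩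
    calc (∑ j, w j * y j) / (∑ j, w j * x j) ≤ 1 / c :=
          div_le_div₀ zero_le_one hnum1 hcpos hd
    _ = c⁻¹ := one_div c
  -- for a fixed y ∈ P, the two sums differ by at most c⁻¹
  have hsumdiff : ∀ y : Fin k → ℝ, (∀ j, c ≤ y j) → (∑ j, y j ≤ 1) →
      |(∑ i, (∑ j, u i j * y j) / (∑ j, u i j * x j)) -
       (∑ i, (∑ j, u' i j * y j) / (∑ j, u' i j * x j))| ≤ c⁻¹ := by
    intro y hylb hysum
    have h1 := hterm (u i') y (hu i') (hu1 i') hylb hysum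
    have h2 := hterm (u' i') y (hu' i') (hu1' i') hylb hysum
    have heq : (∑ i, (∑ j, u i j * y j) / (∑ j, u i j * x j)) -
        (∑ i, (∑ j, u' i j * y j) / (∑ j, u' i j * x j)) =
        (∑ j, u i' j * y j) / (∑ j, u i' j * x j) -
        (∑ j, u' i' j * y j) / (∑ j, u' i' j * x j) := by
      rw [← Finset.sum_sub_distrib]
      rw [Finset.sum_eq_single i']
      · intro i _ hi
        rw [hsame i hi]
        ring
      · intro h; exact absurd (Finset.mem_univ i') h
    rw [heq, abs_sub_le_iff]
    constructor
    · linarith [h1.2, h2.1]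
    · linarith [h2.2, h1.1]
  -- sets
  set S : Set ℝ := {v : ℝ | ∃ y ∈ {x : Fin k → ℝ | (∀ j, c ≤ x j) ∧ ∑ j, x j ≤ 1},
    v = ∑ i, (∑ j, u i j * y j) / (∑ j, u i j * x j)} with hS
  set S' : Set ℝ := {v : ℝ | ∃ y ∈ {x : Fin k → ℝ | (∀ j, c ≤ x j) ∧ ∑ j, x j ≤ 1},
    v = ∑ i, (∑ j, u' i j * y j) / (∑ j, u' i j * x j)} with hS'
  have hSne : S.Nonempty := ⟨_, x, ⟨hxlb, hxsum⟩, rfl⟩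
  have hS'ne : S'.Nonempty := ⟨_, x, ⟨hxlb, hxsum⟩, rfl⟩
  have hSbdd : BddAbove S := by
    refine ⟨(n : ℝ) * c⁻¹, ?_⟩
    rintro v ⟨y, ⟨hylb, hysum⟩, rfl⟩
    calc (∑ i, (∑ j, u i j * y j) / (∑ j, u i j * x j)) ≤ ∑ _i : Fin n, c⁻¹ :=
          Finset.sum_le_sum fun i _ => (hterm (u i) y (hu i) (hu1 i) hylb hysum).2
    _ = (n : ℝ) * c⁻¹ := by simp [mul_comm]
  have hS'bdd : BddAbove S' := by
    refine ⟨(n : ℝ) * c⁻¹, ?_⟩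
    rintro v ⟨y, ⟨hylb, hysum⟩, rfl⟩
    calc (∑ i, (∑ j, u' i j * y j) / (∑ j, u' i j * x j)) ≤ ∑ _i : Fin n, c⁻¹ :=
          Finset.sum_le_sum fun i _ => (hterm (u' i) y (hu' i) (hu1' i) hylb hysum).2
    _ = (n : ℝ) * c⁻¹ := by simp [mul_comm]
  have h1 : sSup S ≤ sSup S' + c⁻¹ := by
    refine csSup_le hSne ?_
    rintro v ⟨y, hy, rfl⟩
    have := hsumdiff y hy.1 hy.2
    rw [abs_sub_le_iff] at this
    have hmem : (∑ i, (∑ j, u' i j * y j) / (∑ j, u' i j * x j)) ∈ S' := ⟨y, hy, rfl⟩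
    have := le_csSup hS'bdd hmem
    linarith [hsumdiff y hy.1 hy.2, (abs_sub_le_iff.mp (hsumdiff y hy.1 hy.2)).1]
  have h2 : sSup S' ≤ sSup S + c⁻¹ := by
    refine csSup_le hS'ne ?_
    rintro v ⟨y, hy, rfl⟩
    have hmem : (∑ i, (∑ j, u i j * y j) / (∑ j, u i j * x j)) ∈ S := ⟨y, hy, rfl⟩
    have := le_csSup hSbdd hmem
    linarith [(abs_sub_le_iff.mp (hsumdiff y hy.1 hy.2)).2]
  have habs : |sSup S - sSup S'| ≤ c⁻¹ := abs_sub_le_iff.mpr ⟨by linarith, by linarith⟩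
  have hcc : c * c⁻¹ = 1 := mul_inv_cancel₀ hcpos.ne'
  have hre : ((n:ℝ) - c * sSup S) - ((n:ℝ) - c * sSup S') = c * (sSup S' - sSup S) := by
    ring
  calc |((n : ℝ) - c * sSup S) - ((n : ℝ) - c * sSup S')| = c * |sSup S - sSup S'| := by
        rw [hre, abs_mul, abs_of_pos hcpos, abs_sub_comm]
  _ ≤ c * c⁻¹ := mul_le_mul_of_nonneg_left habs hcpos.le
  _ = 1 := hcc
end

section
/- Suppose each agent i has differentiable concave utility U_i with ∑_m x_m ∂U_i/∂x_m(x) > 0, and allocation x ≥ 0 satisfies, for ε > 0: if x_j > 0 then |(B/n) ∑_i ∂_j U_i(x)/(∑_m x_m ∂_m U_i(x)) − 1| ≤ ε, and if x_j = 0 then (B/n) ∑_i ∂_j U_i(x)/(∑_m x_m ∂_m U_i(x)) ≤ 1 + ε. Then ∑_j x_j ≤ B/(1−ε). -/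
/-- Part 1 of the approximate Lindahl equilibrium theorem: the approximate
equilibrium conditions imply `∑_j x_j ≤ B/(1−ε)`. -/
theorem stmt13 (n k : ℕ) (B ε : ℝ) (hB : 0 < B) (hn : 0 < n)
    (hε : ε ∈ Set.Ioo (0:ℝ) 1)
    (U : Fin n → (Fin k → ℝ) → ℝ)
    (x : Fin k → ℝ) (hx : ∀ j, 0 ≤ x j)
    (hdiff : ∀ i, DifferentiableAt ℝ (U i) x)
    (hconc : ∀ i, ConcaveOn ℝ {z : Fin k → ℝ | ∀ j, 0 ≤ z j} (U i))
    (hpos : ∀ i, 0 < ∑ m, x m * fderiv ℝ (U i) x (Pi.single m 1))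
    (h1 : ∀ j, 0 < x j →
      |(B / n) * ∑ i, fderiv ℝ (U i) x (Pi.single j 1)
          / (∑ m, x m * fderiv ℝ (U i) x (Pi.single m 1)) - 1| ≤ ε)
    (h2 : ∀ j, x j = 0 →
      (B / n) * ∑ i, fderiv ℝ (U i) x (Pi.single j 1)
          / (∑ m, x m * fderiv ℝ (U i) x (Pi.single m 1)) ≤ 1 + ε) :
    ∑ j, x j ≤ B / (1 - ε) := by
  obtain ⟨hε0, hε1⟩ := hε
  have h1ε : (0:ℝ) < 1 - ε := by linarith
  set p : Fin k → ℝ := fun j => (B / n) * ∑ i, fderiv ℝ (U i) x (Pi.single j 1)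
      / (∑ m, x m * fderiv ℝ (U i) x (Pi.single m 1)) with hp
  -- key: ∑ j, x j * p j = B
  have key : ∑ j, x j * p j = B := by
    have : ∑ j, x j * p j
        = (B / n) * ∑ i, (∑ j, x j * fderiv ℝ (U i) x (Pi.single j 1))
            / (∑ m, x m * fderiv ℝ (U i) x (Pi.single m 1)) := by
      rw [Finset.mul_sum]
      rw [hp]
      simp only [Finset.mul_sum]
      rw [Finset.sum_comm]
      congr 1; ext i
      rw [Finset.sum_div, Finset.mul_sum]
      congr 1; ext j
      ring
    rw [this]
    have : ∀ i, (∑ j, x j * fderiv ℝ (U i) x (Pi.single j 1))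
        / (∑ m, x m * fderiv ℝ (U i) x (Pi.single m 1)) = 1 := fun i =>
      div_self (hpos i).ne'
    simp only [this, Finset.sum_const, Finset.card_univ, Fintype.card_fin,
      nsmul_eq_mul]
    field_simp
  have hle : ∀ j, (1 - ε) * x j ≤ x j * p j := by
    intro j
    rcases eq_or_lt_of_le (hx j) with h | h
    · simp [← h]
    · have := abs_le.mp (h1 j h)
      have hpj : 1 - ε ≤ p j := by rw [hp]; linarith [this.1]
      calc (1 - ε) * x j ≤ p j * x j := by
            exact mul_le_mul_of_nonneg_right hpj (hx j)
        _ = x j * p j := mul_comm _ _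
  have : (1 - ε) * ∑ j, x j ≤ B := by
    rw [Finset.mul_sum, ← key]
    exact Finset.sum_le_sum fun j _ => hle j
  rw [le_div_iff₀ h1ε]
  linarith
end

section
/- Suppose each agent i has Cobb-Douglas utility U_i(x) = ∏_j x_j^{α_{ij}} with α_{ij} > 0 and ∑_j α_{ij} = 1 for every i, and budget B > 0. Then the allocation x_j = (B/n)·∑_i α_{ij} satisfies the Lindahl characterization: for every item j, ∑_i [∂_j U_i(x)/(∑_m x_m ∂_m U_i(x))] = n/B. -/
/-! Since `∂_m U_i(x) = α_{im} U_i(x) / x_m` at a positive point, the denominator is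
`(∑_m α_{im}) U_i(x) = U_i(x)` (Euler's identity), so the `i`-th summand is `α_{ij} / x_j`.
Summing over `i` gives `(∑_i α_{ij}) / x_j = n / B`. -/

open Finset

section CobbDouglas

variable {ι : Type*} [Fintype ι] [DecidableEq ι] (a : ι → ℝ) {x : ι → ℝ}

theorem fderiv_prod_rpow_apply_single (hx : ∀ l, x l ≠ 0) (m : ι) :
    fderiv ℝ (fun y : ι → ℝ => ∏ l, y l ^ a l) x (Pi.single m 1) =
      a m / x m * ∏ l, x l ^ a l := by
  have hfactor : ∀ l, HasFDerivAt (fun y : ι → ℝ => y l ^ a l)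
      ((a l * x l ^ (a l - 1)) • ContinuousLinearMap.proj (R := ℝ) (φ := fun _ : ι => ℝ) l) x :=
    fun l => (hasFDerivAt_apply l x).rpow_const (Or.inl (hx l))
  rw [(HasFDerivAt.finsetProd fun l _ => hfactor l).fderiv]
  simp only [_root_.sum_apply, _root_.smul_apply,
    ContinuousLinearMap.proj_apply, smul_eq_mul, Pi.single_apply, mul_ite, mul_one, mul_zero,
    sum_ite_eq', mem_univ, if_true]
  rw [← prod_erase_mul univ _ (mem_univ m), Real.rpow_sub_one (hx m)]
  field_simp

theorem sum_mul_fderiv_prod_rpow_apply_single (hx : ∀ l, x l ≠ 0) :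
    ∑ m, x m * fderiv ℝ (fun y : ι → ℝ => ∏ l, y l ^ a l) x (Pi.single m 1) =
      (∑ m, a m) * ∏ l, x l ^ a l := by
  simp only [fderiv_prod_rpow_apply_single a hx, sum_mul]
  refine sum_congr rfl fun m _ => ?_
  field_simp [hx m]

theorem fderiv_prod_rpow_apply_single_div_sum (hx : ∀ l, 0 < x l) (ha : ∑ m, a m = 1)
    (j : ι) :
    fderiv ℝ (fun y : ι → ℝ => ∏ l, y l ^ a l) x (Pi.single j 1) /
        ∑ m, x m * fderiv ℝ (fun y : ι → ℝ => ∏ l, y l ^ a l) x (Pi.single m 1) =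
      a j / x j := by
  have hx' : ∀ l, x l ≠ 0 := fun l => (hx l).ne'
  have hprod : 0 < ∏ l, x l ^ a l := prod_pos fun l _ => Real.rpow_pos_of_pos (hx l) _
  rw [sum_mul_fderiv_prod_rpow_apply_single a hx', ha, one_mul,
    fderiv_prod_rpow_apply_single a hx', mul_div_cancel_right₀ _ hprod.ne']

end CobbDouglas

/-- For Cobb-Douglas utilities `U_i(x) = ∏_j x_j^{α_{ij}}` with `α_{ij} > 0` and
`∑_j α_{ij} = 1`, the averaging allocation `x_j = (B/n)·∑_i α_{ij}` satisfies the
Lindahl characterization `∑_i ∂_j U_i(x)/(∑_m x_m ∂_m U_i(x)) = n/B` for every item. -/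
theorem stmt16 (n k : ℕ) (hn : 0 < n) (B : ℝ) (hB : 0 < B)
    (α : Fin n → Fin k → ℝ) (hα : ∀ i j, 0 < α i j) (hα1 : ∀ i, ∑ j, α i j = 1)
    (U : Fin n → (Fin k → ℝ) → ℝ)
    (hU : ∀ i x, U i x = ∏ j, x j ^ α i j)
    (x : Fin k → ℝ) (hx : x = fun j => (B / n) * ∑ i, α i j) :
    ∀ j, ∑ i, fderiv ℝ (U i) x (Pi.single j 1) /
        (∑ m, x m * fderiv ℝ (U i) x (Pi.single m 1)) = (n : ℝ) / B := by
  intro j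
  have hαsum : ∀ m, 0 < ∑ i, α i m := fun m =>
    sum_pos (fun i _ => hα i m) ⟨⟨0, hn⟩, mem_univ _⟩
  have hxpos : ∀ m, 0 < x m := fun m => by
    rw [hx]
    exact mul_pos (div_pos hB (Nat.cast_pos.mpr hn)) (hαsum m)
  have hU' : U = fun i y => ∏ l, y l ^ α i l := funext fun i => funext (hU i)
  simp only [hU', fderiv_prod_rpow_apply_single_div_sum _ hxpos (hα1 _), ← sum_div]
  rw [hx]
  have hn' : (n : ℝ) ≠ 0 := Nat.cast_ne_zero.mpr hn.ne'
  field_simp [(hαsum j).ne']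
end
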